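/- arXiv:2410.00520 — 2 statements merged into one kernel-verified Lean document; each statement's English description precedes it below -/
import Mathlib

section
/- Let f̄(r) = C(σ² + (k_T/2)|r|²)^{−1/(k_T β)} on ℝ² with C, σ, k_T, β > 0. Then f̄ is rotation-invariant and satisfies the stationary equation (k_T/2) div((3|r|² I − 2 r⊗r) ∇f̄(r)) + σ² Δf̄(r) + div((r/β) f̄(r)) = 0 for all r ≠ 0. -/
open Real
noncomputable section
abbrev E2 := EuclideanSpace ℝ (Fin 2)

lemma nsq_fderiv (x : E2) : HasFDerivAt (fun s : E2 => ‖s‖^2) ((2:ℝ) • (innerSL ℝ x)) x := by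
  have h := (hasStrictFDerivAt_norm_sq x).hasFDerivAt
  refine h.congr_fderiv ?_
  ext v; simp

lemma norm_sq_coords (s : E2) : ‖s‖^2 = s 0^2 + s 1^2 := by
  rw [EuclideanSpace.norm_eq, Real.sq_sqrt (by positivity)]
  simp [Fin.sum_univ_two, sq_abs]

lemma grad_g (C σ kT p : ℝ) (hσ : 0 < σ) (hk : 0 < kT) (x : E2) :
    HasGradientAt (fun s : E2 => C * (σ^2 + (kT/2)*‖s‖^2)^p)
      ((C * p * (σ^2 + (kT/2)*‖x‖^2)^(p-1) * kT) • x) x := by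
  have hu : (0:ℝ) < σ^2 + (kT/2)*‖x‖^2 := by positivity
  have h1 : HasFDerivAt (fun s : E2 => σ^2 + (kT/2)*‖s‖^2)
      ((kT/2) • ((2:ℝ) • innerSL ℝ x)) x :=
    ((nsq_fderiv x).const_mul (kT/2)).const_add (σ^2)
  have h2 := (Real.hasDerivAt_rpow_const (x := σ^2 + (kT/2)*‖x‖^2) (p := p)
    (Or.inl hu.ne')).comp_hasFDerivAt x h1
  have h3 := h2.const_mul C
  rw [hasGradientAt_iff_hasFDerivAt]
  refine HasFDerivAt.congr_fderiv h3 ?_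
  ext v
  simp [InnerProductSpace.toDual_apply_apply, inner_smul_left]
  ring

lemma coord_fderiv (i : Fin 2) (r : E2) :
    HasFDerivAt (fun s : E2 => s i) (EuclideanSpace.proj i : E2 →L[ℝ] ℝ) r :=
  (EuclideanSpace.proj i : E2 →L[ℝ] ℝ).hasFDerivAt

lemma key (φ : ℝ → ℝ) (d : ℝ) (i : Fin 2) (r : E2) (hd : HasDerivAt φ d (‖r‖^2)) :
    fderiv ℝ (fun s : E2 => φ (‖s‖^2) * s i) r (EuclideanSpace.single i 1)
      = φ (‖r‖^2) + 2 * d * (r i)^2 := by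
  have hφ : HasFDerivAt (fun s : E2 => φ (‖s‖^2)) (d • ((2:ℝ) • innerSL ℝ r)) r :=
    hd.comp_hasFDerivAt r (nsq_fderiv r)
  have hmul : HasFDerivAt (fun s : E2 => φ (‖s‖^2) * s i) _ r := hφ.mul (coord_fderiv i r)
  rw [hmul.fderiv]
  simp [real_inner_smul_left, EuclideanSpace.inner_single_right]
  fin_cases i <;> simp <;> ring

/-- f̄(r) = C(σ² + (k_T/2)|r|²)^{−1/(k_Tβ)} is rotation-invariant and solves
(k_T/2) div((3|r|²I − 2r⊗r)∇f̄) + σ²Δf̄ + div((r/β) f̄) = 0 for r ≠ 0. -/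
theorem stmt7 (C σ kT β : ℝ) (hC : 0 < C) (hσ : 0 < σ) (hk : 0 < kT) (hβ : 0 < β) :
    (∀ θ : ℝ, ∀ r : EuclideanSpace ℝ (Fin 2),
      (fun r : EuclideanSpace ℝ (Fin 2) =>
          C * (σ^2 + (kT/2)*‖r‖^2) ^ (-(1/(kT*β))))
        ((WithLp.equiv 2 (Fin 2 → ℝ)).symm
          ![Real.cos θ * r 0 - Real.sin θ * r 1,
            Real.sin θ * r 0 + Real.cos θ * r 1]) =
      C * (σ^2 + (kT/2)*‖r‖^2) ^ (-(1/(kT*β)))) ∧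
    (∀ r : EuclideanSpace ℝ (Fin 2), r ≠ 0 →
      (kT/2) * (∑ i : Fin 2,
          fderiv ℝ (fun s : EuclideanSpace ℝ (Fin 2) =>
            ∑ j : Fin 2, ((3*‖s‖^2) * (if i = j then (1:ℝ) else 0) - 2*(s i * s j)) *
              gradient (fun s : EuclideanSpace ℝ (Fin 2) =>
                C * (σ^2 + (kT/2)*‖s‖^2) ^ (-(1/(kT*β)))) s j) r
            (EuclideanSpace.single i 1))
      + σ^2 * (∑ i : Fin 2,
          fderiv ℝ (fun s : EuclideanSpace ℝ (Fin 2) =>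
            gradient (fun s : EuclideanSpace ℝ (Fin 2) =>
              C * (σ^2 + (kT/2)*‖s‖^2) ^ (-(1/(kT*β)))) s i) r
            (EuclideanSpace.single i 1))
      + (∑ i : Fin 2,
          fderiv ℝ (fun s : EuclideanSpace ℝ (Fin 2) =>
            (s i / β) * (C * (σ^2 + (kT/2)*‖s‖^2) ^ (-(1/(kT*β))))) r
            (EuclideanSpace.single i 1)) = 0) := by
  set p : ℝ := -(1/(kT*β)) with hp
  constructor
  · intro θ r
    have hn : ‖(WithLp.equiv 2 (Fin 2 → ℝ)).symm
        ![Real.cos θ * r 0 - Real.sin θ * r 1,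
          Real.sin θ * r 0 + Real.cos θ * r 1]‖^2 = ‖r‖^2 := by
      rw [norm_sq_coords, norm_sq_coords]
      simp only [WithLp.equiv_symm_apply, PiLp.toLp_apply, Matrix.cons_val_zero, Matrix.cons_val_one,
        Matrix.head_cons]
      linear_combination (r 0^2 + r 1^2) * (Real.sin_sq_add_cos_sq θ)
    simp only [hn]
  · intro r hr
    have hgrad : ∀ s : E2,
        gradient (fun s : E2 => C * (σ^2 + (kT/2)*‖s‖^2)^p) s
          = (C * p * (σ^2 + (kT/2)*‖s‖^2)^(p-1) * kT) • s :=
      fun s => (grad_g C σ kT p hσ hk s).gradient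
    set q : ℝ := ‖r‖^2 with hq
    have hq0 : 0 ≤ q := by positivity
    have hUq : (0:ℝ) < σ^2 + (kT/2)*q := by positivity
    have hU : HasDerivAt (fun t : ℝ => σ^2 + (kT/2)*t) (kT/2) q := by
      simpa using ((hasDerivAt_id q).const_mul (kT/2)).const_add (σ^2)
    have hpow : ∀ e : ℝ, HasDerivAt (fun t => (σ^2+(kT/2)*t)^e)
        (e * (σ^2+(kT/2)*q)^(e-1) * (kT/2)) q := by
      intro e
      have := (Real.hasDerivAt_rpow_const (x := σ^2+(kT/2)*q) (p := e)
        (Or.inl hUq.ne')).comp q hU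
      exact this
    -- the three scalar profile functions
    set c : ℝ → ℝ := fun t => C * p * (σ^2+(kT/2)*t)^(p-1) * kT with hc
    have hdc : HasDerivAt c (C * p * ((p-1) * (σ^2+(kT/2)*q)^(p-1-1) * (kT/2)) * kT) q := by
      have := ((hpow (p-1)).const_mul (C*p)).mul_const kT
      convert this using 1 <;> ring_nf
    have hdc1 : HasDerivAt (fun t => c t * t)
        (C * p * ((p-1) * (σ^2+(kT/2)*q)^(p-1-1) * (kT/2)) * kT * q + c q) q := by
      have := hdc.mul (hasDerivAt_id q)
      refine this.congr_deriv ?_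
      simp
    have hdG : HasDerivAt (fun t => (C * (σ^2+(kT/2)*t)^p) / β)
        ((C * (p * (σ^2+(kT/2)*q)^(p-1) * (kT/2))) / β) q := by
      have := (((hpow p).const_mul C).div_const β)
      convert this using 1 <;> ring_nf
    -- rewrite the three integrands
    have e1 : ∀ i : Fin 2, (fun s : E2 =>
        ∑ j : Fin 2, ((3*‖s‖^2) * (if i = j then (1:ℝ) else 0) - 2*(s i * s j)) *
          gradient (fun s : E2 => C * (σ^2 + (kT/2)*‖s‖^2)^p) s j)
        = (fun s : E2 => c (‖s‖^2) * ‖s‖^2 * s i) := by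
      intro i
      funext s
      simp only [hgrad s, Fin.sum_univ_two, PiLp.smul_apply, smul_eq_mul, hc]
      rw [norm_sq_coords s]
      fin_cases i <;> simp <;> ring
    have e2' : ∀ i : Fin 2, (fun s : E2 =>
        gradient (fun s : E2 => C * (σ^2 + (kT/2)*‖s‖^2)^p) s i)
        = (fun s : E2 => c (‖s‖^2) * s i) := by
      intro i
      funext s
      simp only [hgrad s, PiLp.smul_apply, smul_eq_mul, hc]
    have e3 : ∀ i : Fin 2, (fun s : E2 =>
        (s i / β) * (C * (σ^2 + (kT/2)*‖s‖^2)^p))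
        = (fun s : E2 => C * (σ^2+(kT/2)*‖s‖^2)^p / β * s i) := by
      intro i
      funext s
      ring
    have K1 : ∀ i : Fin 2, fderiv ℝ (fun s : E2 => c (‖s‖^2) * ‖s‖^2 * s i) r
          (EuclideanSpace.single i 1)
        = c q * q
          + 2 * (C * p * ((p-1) * (σ^2+(kT/2)*q)^(p-1-1) * (kT/2)) * kT * q + c q) * (r i)^2 :=
      fun i => key (fun t => c t * t) _ i r hdc1
    have K2 : ∀ i : Fin 2, fderiv ℝ (fun s : E2 => c (‖s‖^2) * s i) r
          (EuclideanSpace.single i 1)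
        = c q + 2 * (C * p * ((p-1) * (σ^2+(kT/2)*q)^(p-1-1) * (kT/2)) * kT) * (r i)^2 :=
      fun i => key c _ i r hdc
    have K3 : ∀ i : Fin 2, fderiv ℝ (fun s : E2 => C * (σ^2+(kT/2)*‖s‖^2)^p / β * s i) r
          (EuclideanSpace.single i 1)
        = C * (σ^2+(kT/2)*q)^p / β
          + 2 * (C * (p * (σ^2+(kT/2)*q)^(p-1) * (kT/2)) / β) * (r i)^2 :=
      fun i => key (fun t => C * (σ^2+(kT/2)*t)^p / β) _ i r hdG
    simp only [e1, e2', e3]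
    simp only [K1, K2, K3]
    simp only [Fin.sum_univ_two]
    have hr2 : r 0^2 + r 1^2 = q := (norm_sq_coords r).symm
    simp only [hc]
    rw [← hr2]
    have hu0 : (σ^2+(kT/2)*(r 0^2 + r 1^2)) ≠ 0 := by rw [hr2]; exact hUq.ne'
    have h1 : (σ^2+(kT/2)*(r 0^2+r 1^2))^(p-1)
        = (σ^2+(kT/2)*(r 0^2+r 1^2))^(p-1-1) * (σ^2+(kT/2)*(r 0^2+r 1^2)) := by
      conv_lhs => rw [show p-1 = (p-1-1)+1 by ring, Real.rpow_add_one hu0]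
    have h2 : (σ^2+(kT/2)*(r 0^2+r 1^2))^p
        = (σ^2+(kT/2)*(r 0^2+r 1^2))^(p-1-1) * (σ^2+(kT/2)*(r 0^2+r 1^2))
            * (σ^2+(kT/2)*(r 0^2+r 1^2)) := by
      conv_lhs => rw [show p = (p-1)+1 by ring, Real.rpow_add_one hu0, h1]
    rw [h2, h1]
    generalize (σ^2+(kT/2)*(r 0^2+r 1^2))^(p-1-1) = Y
    simp only [hp]
    field_simp
    ring
end
end

section
/- With σ_k as above, for every x ∈ 𝕋² and r ∈ ℝ², ∑_{k∈K} (∇σ_k(x) r) ⊗ (∇σ_k(x) r) = a² ∑_{k∈K₊, N≤|k|≤2N} |k|^{−6} (k·r)² (k⊥ ⊗ k⊥); in particular this sum is independent of x. -/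
open scoped Classical

lemma dcos (C A B : ℝ) (x r : ℝ × ℝ) :
    fderiv ℝ (fun y : ℝ × ℝ => C * Real.cos (A*y.1+B*y.2)) x r
      = C * (-Real.sin (A*x.1+B*x.2)) * (A*r.1+B*r.2) := by
  have hL : HasFDerivAt (fun y : ℝ × ℝ => A*y.1+B*y.2)
      (A • ContinuousLinearMap.fst ℝ ℝ ℝ + B • ContinuousLinearMap.snd ℝ ℝ ℝ) x :=
    ((hasFDerivAt_fst.const_mul A).add (hasFDerivAt_snd.const_mul B))
  have h := (hL.cos).const_mul C
  rw [h.fderiv]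
  simp [ContinuousLinearMap.smul_apply]
  ring

lemma dsin (C A B : ℝ) (x r : ℝ × ℝ) :
    fderiv ℝ (fun y : ℝ × ℝ => C * Real.sin (A*y.1+B*y.2)) x r
      = C * Real.cos (A*x.1+B*x.2) * (A*r.1+B*r.2) := by
  have hL : HasFDerivAt (fun y : ℝ × ℝ => A*y.1+B*y.2)
      (A • ContinuousLinearMap.fst ℝ ℝ ℝ + B • ContinuousLinearMap.snd ℝ ℝ ℝ) x :=
    ((hasFDerivAt_fst.const_mul A).add (hasFDerivAt_snd.const_mul B))
  have h := (hL.sin).const_mul C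
  rw [h.fderiv]
  simp [ContinuousLinearMap.smul_apply]
  ring

/-- ∑_{k∈K} (∇σ_k(x) r) ⊗ (∇σ_k(x) r)
= a² ∑_{k∈K₊, N≤|k|≤2N} |k|⁻⁶ (k·r)² (k⊥ ⊗ k⊥), independent of x. -/
theorem stmt11 (a : ℝ) (ha : 0 < a) (N : ℕ) (hN : 0 < N) (x r : ℝ × ℝ) :
    let θ : ℤ × ℤ → ℝ := fun k =>
      if (N:ℝ) ≤ Real.sqrt ((k.1:ℝ)^2 + (k.2:ℝ)^2) ∧
          Real.sqrt ((k.1:ℝ)^2 + (k.2:ℝ)^2) ≤ 2*N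
        then a / ((k.1:ℝ)^2 + (k.2:ℝ)^2) else 0
    let σ : ℤ × ℤ → (ℝ × ℝ) → Fin 2 → ℝ := fun k y =>
      if (0 ≤ k.1 ∧ 0 < k.2) ∨ (0 < k.1 ∧ k.2 ≤ 0) then
        fun i : Fin 2 =>
          θ k * (![-(k.2:ℝ), (k.1:ℝ)] i / Real.sqrt ((k.1:ℝ)^2 + (k.2:ℝ)^2)) *
            Real.cos ((k.1:ℝ) * y.1 + (k.2:ℝ) * y.2)
      else if (k.1 < 0 ∧ 0 ≤ k.2) ∨ (k.1 ≤ 0 ∧ k.2 < 0) then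
        fun i : Fin 2 =>
          θ k * (![-(k.2:ℝ), (k.1:ℝ)] i / Real.sqrt ((k.1:ℝ)^2 + (k.2:ℝ)^2)) *
            Real.sin ((k.1:ℝ) * y.1 + (k.2:ℝ) * y.2)
      else 0
    (∑ᶠ k : ℤ × ℤ, Matrix.of fun i j : Fin 2 =>
        (fderiv ℝ (fun y : ℝ × ℝ => σ k y i) x r) *
        (fderiv ℝ (fun y : ℝ × ℝ => σ k y j) x r)) =
    Matrix.of fun i j : Fin 2 =>
      a^2 * ∑ᶠ k ∈ {k : ℤ × ℤ |
          ((0 ≤ k.1 ∧ 0 < k.2) ∨ (0 < k.1 ∧ k.2 ≤ 0)) ∧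
          (N:ℝ) ≤ Real.sqrt ((k.1:ℝ)^2 + (k.2:ℝ)^2) ∧
          Real.sqrt ((k.1:ℝ)^2 + (k.2:ℝ)^2) ≤ 2*N},
        (Real.sqrt ((k.1:ℝ)^2 + (k.2:ℝ)^2))⁻¹^6 *
          ((k.1:ℝ) * r.1 + (k.2:ℝ) * r.2)^2 *
          (![-(k.2:ℝ), (k.1:ℝ)] i * ![-(k.2:ℝ), (k.1:ℝ)] j) := by
  intro θ σ
  have hθdef : θ = fun k : ℤ × ℤ =>
      if (N:ℝ) ≤ Real.sqrt ((k.1:ℝ)^2 + (k.2:ℝ)^2) ∧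
          Real.sqrt ((k.1:ℝ)^2 + (k.2:ℝ)^2) ≤ 2*N
        then a / ((k.1:ℝ)^2 + (k.2:ℝ)^2) else 0 := rfl
  have hσdef : σ = fun (k : ℤ × ℤ) (y : ℝ × ℝ) =>
      if (0 ≤ k.1 ∧ 0 < k.2) ∨ (0 < k.1 ∧ k.2 ≤ 0) then
        fun i : Fin 2 =>
          θ k * (![-(k.2:ℝ), (k.1:ℝ)] i / Real.sqrt ((k.1:ℝ)^2 + (k.2:ℝ)^2)) *
            Real.cos ((k.1:ℝ) * y.1 + (k.2:ℝ) * y.2)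
      else if (k.1 < 0 ∧ 0 ≤ k.2) ∨ (k.1 ≤ 0 ∧ k.2 < 0) then
        fun i : Fin 2 =>
          θ k * (![-(k.2:ℝ), (k.1:ℝ)] i / Real.sqrt ((k.1:ℝ)^2 + (k.2:ℝ)^2)) *
            Real.sin ((k.1:ℝ) * y.1 + (k.2:ℝ) * y.2)
      else 0 := rfl
  -- the big finset
  set S : Finset (ℤ × ℤ) :=
    Finset.Icc (-(2*(N:ℤ))) (2*N) ×ˢ Finset.Icc (-(2*(N:ℤ))) (2*N) with hSdef
  -- membership from shell bound
  have key : ∀ k : ℤ × ℤ, Real.sqrt ((k.1:ℝ)^2 + (k.2:ℝ)^2) ≤ 2*N → k ∈ S := by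
    intro k h
    have h1 : |(k.1:ℝ)| ≤ 2*N := by
      rw [← Real.sqrt_sq_eq_abs]
      exact le_trans (Real.sqrt_le_sqrt (by nlinarith [sq_nonneg ((k.2:ℝ))])) h
    have h2 : |(k.2:ℝ)| ≤ 2*N := by
      rw [← Real.sqrt_sq_eq_abs]
      exact le_trans (Real.sqrt_le_sqrt (by nlinarith [sq_nonneg ((k.1:ℝ))])) h
    rw [← Int.cast_abs] at h1 h2
    have h1' : |k.1| ≤ 2*(N:ℤ) := by exact_mod_cast h1
    have h2' : |k.2| ≤ 2*(N:ℤ) := by exact_mod_cast h2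
    rw [abs_le] at h1' h2'
    simp only [hSdef, Finset.mem_product, Finset.mem_Icc]
    exact ⟨⟨h1'.1, h1'.2⟩, ⟨h2'.1, h2'.2⟩⟩
  have habs : ∀ k : ℤ × ℤ, k ∉ S → θ k = 0 := by
    intro k hk
    refine if_neg ?_
    rintro ⟨-, h2⟩
    exact hk (key k h2)
  -- derivative computations
  have hplusD : ∀ k : ℤ × ℤ, ((0 ≤ k.1 ∧ 0 < k.2) ∨ (0 < k.1 ∧ k.2 ≤ 0)) → ∀ i : Fin 2,
      fderiv ℝ (fun y : ℝ × ℝ => σ k y i) x r =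
        θ k * (![-(k.2:ℝ), (k.1:ℝ)] i / Real.sqrt ((k.1:ℝ)^2 + (k.2:ℝ)^2)) *
          (-Real.sin ((k.1:ℝ) * x.1 + (k.2:ℝ) * x.2)) * ((k.1:ℝ) * r.1 + (k.2:ℝ) * r.2) := by
    intro k hk i
    have hfun : (fun y : ℝ × ℝ => σ k y i) = fun y : ℝ × ℝ =>
        (θ k * (![-(k.2:ℝ), (k.1:ℝ)] i / Real.sqrt ((k.1:ℝ)^2 + (k.2:ℝ)^2))) *
          Real.cos ((k.1:ℝ) * y.1 + (k.2:ℝ) * y.2) := by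
      funext y
      simp only [hσdef]
      rw [if_pos hk]
    rw [hfun, dcos]
  have hminusD : ∀ k : ℤ × ℤ, ((k.1 < 0 ∧ 0 ≤ k.2) ∨ (k.1 ≤ 0 ∧ k.2 < 0)) → ∀ i : Fin 2,
      fderiv ℝ (fun y : ℝ × ℝ => σ k y i) x r =
        θ k * (![-(k.2:ℝ), (k.1:ℝ)] i / Real.sqrt ((k.1:ℝ)^2 + (k.2:ℝ)^2)) *
          Real.cos ((k.1:ℝ) * x.1 + (k.2:ℝ) * x.2) * ((k.1:ℝ) * r.1 + (k.2:ℝ) * r.2) := by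
    intro k hk i
    have hk' : ¬ ((0 ≤ k.1 ∧ 0 < k.2) ∨ (0 < k.1 ∧ k.2 ≤ 0)) := by omega
    have hfun : (fun y : ℝ × ℝ => σ k y i) = fun y : ℝ × ℝ =>
        (θ k * (![-(k.2:ℝ), (k.1:ℝ)] i / Real.sqrt ((k.1:ℝ)^2 + (k.2:ℝ)^2))) *
          Real.sin ((k.1:ℝ) * y.1 + (k.2:ℝ) * y.2) := by
      funext y
      simp only [hσdef]
      rw [if_neg hk', if_pos hk]
    rw [hfun, dsin]
  have hzeroD : ∀ k : ℤ × ℤ, ¬ ((0 ≤ k.1 ∧ 0 < k.2) ∨ (0 < k.1 ∧ k.2 ≤ 0)) →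
      ¬ ((k.1 < 0 ∧ 0 ≤ k.2) ∨ (k.1 ≤ 0 ∧ k.2 < 0)) → ∀ i : Fin 2,
      fderiv ℝ (fun y : ℝ × ℝ => σ k y i) x r = 0 := by
    intro k h1 h2 i
    have hfun : (fun y : ℝ × ℝ => σ k y i) = fun _ : ℝ × ℝ => (0:ℝ) := by
      funext y
      simp only [hσdef]
      rw [if_neg h1, if_neg h2]
      simp
    rw [hfun]
    simp
  have hθzD : ∀ k : ℤ × ℤ, θ k = 0 → ∀ i : Fin 2,
      fderiv ℝ (fun y : ℝ × ℝ => σ k y i) x r = 0 := by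
    intro k hz i
    have hfun : (fun y : ℝ × ℝ => σ k y i) = fun _ : ℝ × ℝ => (0:ℝ) := by
      funext y
      simp only [hσdef]
      split_ifs <;> simp [hz]
    rw [hfun]
    simp
  -- support subset, convert LHS finsum to finset sum
  have hsupp : (Function.support fun k : ℤ × ℤ => Matrix.of fun i j : Fin 2 =>
      (fderiv ℝ (fun y : ℝ × ℝ => σ k y i) x r) *
      (fderiv ℝ (fun y : ℝ × ℝ => σ k y j) x r)) ⊆ ↑S := by
    intro k hk
    rw [Function.mem_support] at hk
    by_contra hkS
    apply hk
    ext i j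
    simp only [Matrix.of_apply, Matrix.zero_apply]
    rw [hθzD k (habs k hkS) i, zero_mul]
  rw [finsum_eq_finset_sum_of_support_subset _ hsupp]
  -- convert RHS finsum to finset sum
  have hset : {k : ℤ × ℤ |
      ((0 ≤ k.1 ∧ 0 < k.2) ∨ (0 < k.1 ∧ k.2 ≤ 0)) ∧
      (N:ℝ) ≤ Real.sqrt ((k.1:ℝ)^2 + (k.2:ℝ)^2) ∧
      Real.sqrt ((k.1:ℝ)^2 + (k.2:ℝ)^2) ≤ 2*N} =
      ↑(S.filter fun k : ℤ × ℤ =>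
        ((0 ≤ k.1 ∧ 0 < k.2) ∨ (0 < k.1 ∧ k.2 ≤ 0)) ∧
        (N:ℝ) ≤ Real.sqrt ((k.1:ℝ)^2 + (k.2:ℝ)^2) ∧
        Real.sqrt ((k.1:ℝ)^2 + (k.2:ℝ)^2) ≤ 2*N) := by
    ext k
    simp only [Set.mem_setOf_eq, Finset.coe_filter, Set.mem_setOf_eq, Finset.mem_coe]
    constructor
    · intro h
      exact ⟨key k h.2.2, h⟩
    · intro h
      exact h.2
  simp only [hset, finsum_mem_coe_finset]
  ext i j
  simp only [Matrix.sum_apply, Matrix.of_apply]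
  -- abbreviations
  set T := S.filter fun k : ℤ × ℤ =>
      ((0 ≤ k.1 ∧ 0 < k.2) ∨ (0 < k.1 ∧ k.2 ≤ 0)) ∧
      (N:ℝ) ≤ Real.sqrt ((k.1:ℝ)^2 + (k.2:ℝ)^2) ∧
      Real.sqrt ((k.1:ℝ)^2 + (k.2:ℝ)^2) ≤ 2*N with hTdef
  set c : ℤ × ℤ → ℝ := fun k =>
    θ k ^ 2 * (((k.1:ℝ)^2 + (k.2:ℝ)^2))⁻¹ *
      (![-(k.2:ℝ), (k.1:ℝ)] i * ![-(k.2:ℝ), (k.1:ℝ)] j) *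
      ((k.1:ℝ) * r.1 + (k.2:ℝ) * r.2)^2 with hcdef
  have hposT : ∀ k : ℤ × ℤ, k ≠ 0 → (0:ℝ) < (k.1:ℝ)^2 + (k.2:ℝ)^2 := by
    intro k hk
    have hor : k.1 ≠ 0 ∨ k.2 ≠ 0 := by
      by_contra hcon
      push_neg at hcon
      exact hk (Prod.ext hcon.1 hcon.2)
    rcases hor with h | h
    · have : (k.1:ℝ) ≠ 0 := Int.cast_ne_zero.mpr h
      positivity
    · have : (k.2:ℝ) ≠ 0 := Int.cast_ne_zero.mpr h
      positivity
  have hplus : ∀ k : ℤ × ℤ, ((0 ≤ k.1 ∧ 0 < k.2) ∨ (0 < k.1 ∧ k.2 ≤ 0)) →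
      (fderiv ℝ (fun y : ℝ × ℝ => σ k y i) x r) * (fderiv ℝ (fun y : ℝ × ℝ => σ k y j) x r)
        = c k * Real.sin ((k.1:ℝ) * x.1 + (k.2:ℝ) * x.2) ^ 2 := by
    intro k hk
    have hk0 : k ≠ 0 := by
      intro h; rw [h] at hk; revert hk; decide
    have ht := hposT k hk0
    have hs : Real.sqrt ((k.1:ℝ)^2 + (k.2:ℝ)^2) ^ 2 = (k.1:ℝ)^2 + (k.2:ℝ)^2 :=
      Real.sq_sqrt ht.le
    have hs0 : Real.sqrt ((k.1:ℝ)^2 + (k.2:ℝ)^2) ≠ 0 := (Real.sqrt_pos.mpr ht).ne'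
    rw [hplusD k hk i, hplusD k hk j]
    simp only [hcdef]
    rw [← hs]
    field_simp
    rw [Real.sqrt_sq (Real.sqrt_nonneg _)]
  have hminus : ∀ k : ℤ × ℤ, ((k.1 < 0 ∧ 0 ≤ k.2) ∨ (k.1 ≤ 0 ∧ k.2 < 0)) →
      (fderiv ℝ (fun y : ℝ × ℝ => σ k y i) x r) * (fderiv ℝ (fun y : ℝ × ℝ => σ k y j) x r)
        = c k * Real.cos ((k.1:ℝ) * x.1 + (k.2:ℝ) * x.2) ^ 2 := by
    intro k hk
    have hk0 : k ≠ 0 := by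
      intro h; rw [h] at hk; revert hk; decide
    have ht := hposT k hk0
    have hs : Real.sqrt ((k.1:ℝ)^2 + (k.2:ℝ)^2) ^ 2 = (k.1:ℝ)^2 + (k.2:ℝ)^2 :=
      Real.sq_sqrt ht.le
    have hs0 : Real.sqrt ((k.1:ℝ)^2 + (k.2:ℝ)^2) ≠ 0 := (Real.sqrt_pos.mpr ht).ne'
    rw [hminusD k hk i, hminusD k hk j]
    simp only [hcdef]
    rw [← hs]
    field_simp
    rw [Real.sqrt_sq (Real.sqrt_nonneg _)]
  have hdecomp : ∀ k : ℤ × ℤ,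
      (fderiv ℝ (fun y : ℝ × ℝ => σ k y i) x r) * (fderiv ℝ (fun y : ℝ × ℝ => σ k y j) x r)
        = (if (0 ≤ k.1 ∧ 0 < k.2) ∨ (0 < k.1 ∧ k.2 ≤ 0)
            then c k * Real.sin ((k.1:ℝ) * x.1 + (k.2:ℝ) * x.2) ^ 2 else 0)
          + (if (k.1 < 0 ∧ 0 ≤ k.2) ∨ (k.1 ≤ 0 ∧ k.2 < 0)
            then c k * Real.cos ((k.1:ℝ) * x.1 + (k.2:ℝ) * x.2) ^ 2 else 0) := by
    intro k
    by_cases h1 : (0 ≤ k.1 ∧ 0 < k.2) ∨ (0 < k.1 ∧ k.2 ≤ 0)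
    · have h2 : ¬ ((k.1 < 0 ∧ 0 ≤ k.2) ∨ (k.1 ≤ 0 ∧ k.2 < 0)) := by omega
      rw [if_pos h1, if_neg h2, add_zero]
      exact hplus k h1
    · by_cases h2 : (k.1 < 0 ∧ 0 ≤ k.2) ∨ (k.1 ≤ 0 ∧ k.2 < 0)
      · rw [if_neg h1, if_pos h2, zero_add]
        exact hminus k h2
      · rw [if_neg h1, if_neg h2, add_zero]
        rw [hzeroD k h1 h2 i, zero_mul]
  -- the reindexing by negation
  have hneg : (∑ k ∈ S, if (k.1 < 0 ∧ 0 ≤ k.2) ∨ (k.1 ≤ 0 ∧ k.2 < 0)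
        then c k * Real.cos ((k.1:ℝ) * x.1 + (k.2:ℝ) * x.2) ^ 2 else 0)
      = ∑ k ∈ S, if (0 ≤ k.1 ∧ 0 < k.2) ∨ (0 < k.1 ∧ k.2 ≤ 0)
        then c k * Real.cos ((k.1:ℝ) * x.1 + (k.2:ℝ) * x.2) ^ 2 else 0 := by
    refine Finset.sum_equiv (Equiv.neg (ℤ × ℤ)) ?_ ?_
    · intro k
      simp only [hSdef, Equiv.neg_apply, Finset.mem_product, Finset.mem_Icc, Prod.fst_neg,
        Prod.snd_neg]
      omega
    · intro k _
      simp only [Equiv.neg_apply, Prod.fst_neg, Prod.snd_neg, Int.cast_neg]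
      have hiff : ((k.1 < 0 ∧ 0 ≤ k.2) ∨ (k.1 ≤ 0 ∧ k.2 < 0)) ↔
          ((0 ≤ -k.1 ∧ 0 < -k.2) ∨ (0 < -k.1 ∧ -k.2 ≤ 0)) := by omega
      by_cases h : (k.1 < 0 ∧ 0 ≤ k.2) ∨ (k.1 ≤ 0 ∧ k.2 < 0)
      · rw [if_pos h, if_pos (hiff.mp h)]
        have harg : ((-k).1:ℝ)^2 + ((-k).2:ℝ)^2 = (k.1:ℝ)^2 + (k.2:ℝ)^2 := by
          push_cast [Prod.fst_neg, Prod.snd_neg]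
          ring
        have hθeq : θ (-k) = θ k := by
          simp only [hθdef, harg]
        have hcc : c (-k) = c k := by
          simp only [hcdef, Prod.fst_neg, Prod.snd_neg, Int.cast_neg, neg_neg]
          rw [hθeq]
          have hq : ∀ m : Fin 2, (![(k.2:ℝ), -(k.1:ℝ)] : Fin 2 → ℝ) m
              = -((![-(k.2:ℝ), (k.1:ℝ)] : Fin 2 → ℝ) m) := by
            intro m; fin_cases m <;> simp
          rw [hq i, hq j]
          ring
        have hex : -((k.1:ℝ)) * x.1 + -((k.2:ℝ)) * x.2
            = -((k.1:ℝ) * x.1 + (k.2:ℝ) * x.2) := by ring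
        rw [hcc, hex, Real.cos_neg]
      · rw [if_neg h, if_neg (fun hh => h (hiff.mpr hh))]
  have hshell : ∀ k : ℤ × ℤ, ((0 ≤ k.1 ∧ 0 < k.2) ∨ (0 < k.1 ∧ k.2 ≤ 0)) →
      c k = if (N:ℝ) ≤ Real.sqrt ((k.1:ℝ)^2 + (k.2:ℝ)^2) ∧
          Real.sqrt ((k.1:ℝ)^2 + (k.2:ℝ)^2) ≤ 2*N
        then a^2 * ((Real.sqrt ((k.1:ℝ)^2 + (k.2:ℝ)^2))⁻¹^6 *
          ((k.1:ℝ) * r.1 + (k.2:ℝ) * r.2)^2 *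
          (![-(k.2:ℝ), (k.1:ℝ)] i * ![-(k.2:ℝ), (k.1:ℝ)] j)) else 0 := by
    intro k hk
    by_cases h : (N:ℝ) ≤ Real.sqrt ((k.1:ℝ)^2 + (k.2:ℝ)^2) ∧
        Real.sqrt ((k.1:ℝ)^2 + (k.2:ℝ)^2) ≤ 2*N
    · rw [if_pos h]
      have hk0 : k ≠ 0 := by
        intro hh; rw [hh] at hk; revert hk; decide
      have ht := hposT k hk0
      have hs : Real.sqrt ((k.1:ℝ)^2 + (k.2:ℝ)^2) ^ 2 = (k.1:ℝ)^2 + (k.2:ℝ)^2 :=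
        Real.sq_sqrt ht.le
      have hs0 : Real.sqrt ((k.1:ℝ)^2 + (k.2:ℝ)^2) ≠ 0 := (Real.sqrt_pos.mpr ht).ne'
      have hθv : θ k = a / ((k.1:ℝ)^2 + (k.2:ℝ)^2) := if_pos h
      have h6 : (Real.sqrt ((k.1:ℝ)^2 + (k.2:ℝ)^2))⁻¹ ^ 6 = (((k.1:ℝ)^2 + (k.2:ℝ)^2) ^ 3)⁻¹ := by
        rw [inv_pow, show (Real.sqrt ((k.1:ℝ)^2 + (k.2:ℝ)^2)) ^ 6
          = ((Real.sqrt ((k.1:ℝ)^2 + (k.2:ℝ)^2)) ^ 2) ^ 3 by ring, hs]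
      simp only [hcdef, hθv]
      rw [h6]
      field_simp
    · rw [if_neg h]
      have hθv : θ k = 0 := if_neg h
      simp only [hcdef, hθv]
      ring
  calc (∑ k ∈ S, (fderiv ℝ (fun y : ℝ × ℝ => σ k y i) x r) *
          (fderiv ℝ (fun y : ℝ × ℝ => σ k y j) x r))
      = ∑ k ∈ S, ((if (0 ≤ k.1 ∧ 0 < k.2) ∨ (0 < k.1 ∧ k.2 ≤ 0)
            then c k * Real.sin ((k.1:ℝ) * x.1 + (k.2:ℝ) * x.2) ^ 2 else 0)
          + (if (k.1 < 0 ∧ 0 ≤ k.2) ∨ (k.1 ≤ 0 ∧ k.2 < 0)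
            then c k * Real.cos ((k.1:ℝ) * x.1 + (k.2:ℝ) * x.2) ^ 2 else 0)) :=
        Finset.sum_congr rfl (fun k _ => hdecomp k)
    _ = (∑ k ∈ S, if (0 ≤ k.1 ∧ 0 < k.2) ∨ (0 < k.1 ∧ k.2 ≤ 0)
            then c k * Real.sin ((k.1:ℝ) * x.1 + (k.2:ℝ) * x.2) ^ 2 else 0)
        + ∑ k ∈ S, if (k.1 < 0 ∧ 0 ≤ k.2) ∨ (k.1 ≤ 0 ∧ k.2 < 0)
            then c k * Real.cos ((k.1:ℝ) * x.1 + (k.2:ℝ) * x.2) ^ 2 else 0 :=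
        Finset.sum_add_distrib
    _ = ∑ k ∈ S, ((if (0 ≤ k.1 ∧ 0 < k.2) ∨ (0 < k.1 ∧ k.2 ≤ 0)
            then c k * Real.sin ((k.1:ℝ) * x.1 + (k.2:ℝ) * x.2) ^ 2 else 0)
          + (if (0 ≤ k.1 ∧ 0 < k.2) ∨ (0 < k.1 ∧ k.2 ≤ 0)
            then c k * Real.cos ((k.1:ℝ) * x.1 + (k.2:ℝ) * x.2) ^ 2 else 0)) := by
        rw [hneg, ← Finset.sum_add_distrib]
    _ = ∑ k ∈ S, (if (0 ≤ k.1 ∧ 0 < k.2) ∨ (0 < k.1 ∧ k.2 ≤ 0) then c k else 0) := by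
        refine Finset.sum_congr rfl (fun k _ => ?_)
        by_cases h : (0 ≤ k.1 ∧ 0 < k.2) ∨ (0 < k.1 ∧ k.2 ≤ 0)
        · rw [if_pos h, if_pos h, if_pos h, ← mul_add, add_comm
            (Real.sin ((k.1:ℝ) * x.1 + (k.2:ℝ) * x.2) ^ 2), Real.cos_sq_add_sin_sq, mul_one]
        · rw [if_neg h, if_neg h, if_neg h, add_zero]
    _ = ∑ k ∈ S.filter (fun k => (0 ≤ k.1 ∧ 0 < k.2) ∨ (0 < k.1 ∧ k.2 ≤ 0)), c k :=
        (Finset.sum_filter _ _).symm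
    _ = ∑ k ∈ S.filter (fun k => (0 ≤ k.1 ∧ 0 < k.2) ∨ (0 < k.1 ∧ k.2 ≤ 0)),
          (if (N:ℝ) ≤ Real.sqrt ((k.1:ℝ)^2 + (k.2:ℝ)^2) ∧
              Real.sqrt ((k.1:ℝ)^2 + (k.2:ℝ)^2) ≤ 2*N
            then a^2 * ((Real.sqrt ((k.1:ℝ)^2 + (k.2:ℝ)^2))⁻¹^6 *
              ((k.1:ℝ) * r.1 + (k.2:ℝ) * r.2)^2 *
              (![-(k.2:ℝ), (k.1:ℝ)] i * ![-(k.2:ℝ), (k.1:ℝ)] j)) else 0) := by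
        refine Finset.sum_congr rfl (fun k hk => ?_)
        exact hshell k (Finset.mem_filter.mp hk).2
    _ = ∑ k ∈ (S.filter (fun k => (0 ≤ k.1 ∧ 0 < k.2) ∨ (0 < k.1 ∧ k.2 ≤ 0))).filter
          (fun k => (N:ℝ) ≤ Real.sqrt ((k.1:ℝ)^2 + (k.2:ℝ)^2) ∧
              Real.sqrt ((k.1:ℝ)^2 + (k.2:ℝ)^2) ≤ 2*N),
          a^2 * ((Real.sqrt ((k.1:ℝ)^2 + (k.2:ℝ)^2))⁻¹^6 *
              ((k.1:ℝ) * r.1 + (k.2:ℝ) * r.2)^2 *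
              (![-(k.2:ℝ), (k.1:ℝ)] i * ![-(k.2:ℝ), (k.1:ℝ)] j)) :=
        (Finset.sum_filter _ _).symm
    _ = ∑ k ∈ T, a^2 * ((Real.sqrt ((k.1:ℝ)^2 + (k.2:ℝ)^2))⁻¹^6 *
              ((k.1:ℝ) * r.1 + (k.2:ℝ) * r.2)^2 *
              (![-(k.2:ℝ), (k.1:ℝ)] i * ![-(k.2:ℝ), (k.1:ℝ)] j)) := by
        rw [hTdef, Finset.filter_filter]
    _ = a^2 * ∑ k ∈ T, (Real.sqrt ((k.1:ℝ)^2 + (k.2:ℝ)^2))⁻¹^6 *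
              ((k.1:ℝ) * r.1 + (k.2:ℝ) * r.2)^2 *
              (![-(k.2:ℝ), (k.1:ℝ)] i * ![-(k.2:ℝ), (k.1:ℝ)] j) := by
        rw [Finset.mul_sum]
end
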